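/- arXiv:1105.5508 — 3 statements merged into one kernel-verified Lean document; each statement's English description precedes it below -/
import Mathlib

section
/- For every integer a with 0 ≤ a < pq one has #{(i,j) : 1 ≤ i ≤ p−1, 1 ≤ j ≤ q−1, and either iq + jp ≤ a or pq < iq + jp ≤ pq + a} = a − ⌊a/p⌋ − ⌊a/q⌋. (In terms of the spectrum, this counts the spectral numbers i/p + j/q lying in (0, a/(pq)] ∪ (1, 1 + a/(pq)].) -/
section Aux

variable {p q : ℕ}

/-- auxiliary: solve `i * q ≡ n [MOD p]` with `1 ≤ i ≤ p - 1` when `p ∤ n`. -/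
lemma exists_solution (hp : 2 ≤ p) (hcop : Nat.Coprime q p) {n : ℕ} (hn : ¬ p ∣ n) :
    ∃ i, 1 ≤ i ∧ i ≤ p - 1 ∧ i * q ≡ n [MOD p] := by
  haveI : NeZero p := ⟨by omega⟩
  have hu : IsUnit (q : ZMod p) := (ZMod.isUnit_iff_coprime q p).mpr hcop
  refine ⟨((n : ZMod p) * (q : ZMod p)⁻¹).val, ?_, ?_, ?_⟩
  · rcases Nat.eq_zero_or_pos ((n : ZMod p) * (q : ZMod p)⁻¹).val with h0 | h1
    · exfalso
      apply hn
      have hz : ((n : ZMod p) * (q : ZMod p)⁻¹) = 0 := (ZMod.val_eq_zero _).mp h0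
      have hq0 : ((n : ZMod p) * (q : ZMod p)⁻¹) * (q : ZMod p) = 0 := by
        rw [hz]; ring
      rw [mul_assoc, ZMod.inv_mul_of_unit _ hu, mul_one] at hq0
      exact (ZMod.natCast_eq_zero_iff n p).mp hq0
    · exact h1
  · have := ZMod.val_lt ((n : ZMod p) * (q : ZMod p)⁻¹)
    omega
  · have : ((((n : ZMod p) * (q : ZMod p)⁻¹).val * q : ℕ) : ZMod p) = ((n : ℕ) : ZMod p) := by
      push_cast
      rw [ZMod.natCast_val, ZMod.cast_id, mul_assoc, ZMod.inv_mul_of_unit _ hu, mul_one]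
    exact (ZMod.natCast_eq_natCast_iff _ _ _).mp this

end Aux

/-- for `0 ≤ a < pq`, the number of pairs `(i,j)` with `1 ≤ i ≤ p−1`,
`1 ≤ j ≤ q−1` and either `iq + jp ≤ a` or `pq < iq + jp ≤ pq + a` equals
`a − ⌊a/p⌋ − ⌊a/q⌋`; these pairs count the spectral numbers `i/p + j/q` of the plane curve
singularity `x^p + y^q = 0` lying in `(0, a/(pq)] ∪ (1, 1 + a/(pq)]`. -/
theorem spectrum_count_in_union (p q : ℕ) (hp : 2 ≤ p) (hpq : p < q) (hcop : Nat.Coprime p q)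
    (a : ℕ) (ha : a < p * q) :
    (Set.ncard {x : ℕ × ℕ | 1 ≤ x.1 ∧ x.1 ≤ p - 1 ∧ 1 ≤ x.2 ∧ x.2 ≤ q - 1 ∧
        (x.1 * q + x.2 * p ≤ a ∨
          (p * q < x.1 * q + x.2 * p ∧ x.1 * q + x.2 * p ≤ p * q + a))} : ℤ) =
      (a : ℤ) - ((a / p : ℕ) : ℤ) - ((a / q : ℕ) : ℤ) := by
  classical
  have hq2 : 2 ≤ q := by omega
  set S : Finset (ℕ × ℕ) := (Finset.Icc 1 (p-1) ×ˢ Finset.Icc 1 (q-1)).filter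
    (fun x => x.1 * q + x.2 * p ≤ a ∨
      (p * q < x.1 * q + x.2 * p ∧ x.1 * q + x.2 * p ≤ p * q + a)) with hSdef
  have hsetS : {x : ℕ × ℕ | 1 ≤ x.1 ∧ x.1 ≤ p - 1 ∧ 1 ≤ x.2 ∧ x.2 ≤ q - 1 ∧
        (x.1 * q + x.2 * p ≤ a ∨
          (p * q < x.1 * q + x.2 * p ∧ x.1 * q + x.2 * p ≤ p * q + a))} = ↑S := by
    ext x
    simp only [hSdef, Finset.coe_filter, Finset.mem_product, Finset.mem_Icc, Set.mem_setOf_eq]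
    tauto
  set T : Finset ℕ := (Finset.Ioc 0 a).filter (fun n => ¬ p ∣ n ∧ ¬ q ∣ n) with hTdef
  -- key divisibility facts
  have hndvd : ∀ i j : ℕ, 1 ≤ i → i ≤ p - 1 → 1 ≤ j → j ≤ q - 1 →
      ¬ p ∣ (i * q + j * p) ∧ ¬ q ∣ (i * q + j * p) := by
    intro i j hi1 hi2 hj1 hj2
    constructor
    · intro hdvd
      have h2 : p ∣ i * q := (Nat.dvd_add_right (dvd_mul_left p j)).mp
        (by rwa [add_comm] at hdvd)
      have h3 := hcop.dvd_of_dvd_mul_right h2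
      have := Nat.le_of_dvd (by omega) h3
      omega
    · intro hdvd
      have h2 : q ∣ j * p := (Nat.dvd_add_right (dvd_mul_left q i)).mp hdvd
      have h3 := hcop.symm.dvd_of_dvd_mul_right h2
      have := Nat.le_of_dvd (by omega) h3
      omega
  have hlt2 : ∀ i j : ℕ, i ≤ p - 1 → j ≤ q - 1 → i * q + j * p < 2 * (p * q) := by
    intro i j hi hj
    obtain ⟨P, hP⟩ : ∃ P, p = P + 1 := ⟨p - 1, by omega⟩
    obtain ⟨Q, hQ⟩ : ∃ Q, q = Q + 1 := ⟨q - 1, by omega⟩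
    subst hP hQ
    simp only [Nat.add_sub_cancel] at hi hj
    have h1 : i * (Q + 1) ≤ P * (Q + 1) := Nat.mul_le_mul_right _ hi
    have h2 : j * (P + 1) ≤ Q * (P + 1) := Nat.mul_le_mul_right _ hj
    nlinarith [h1, h2]
  -- the bijection
  have hcard : S.card = T.card := by
    apply Finset.card_bij (fun x _ => (x.1 * q + x.2 * p) % (p * q))
    · -- maps into T
      rintro ⟨i, j⟩ hx
      simp only [hSdef, Finset.mem_filter, Finset.mem_product, Finset.mem_Icc] at hx
      obtain ⟨⟨⟨hi1, hi2⟩, hj1, hj2⟩, hcond⟩ := hx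
      obtain ⟨hpd, hqd⟩ := hndvd i j hi1 hi2 hj1 hj2
      simp only [hTdef, Finset.mem_filter, Finset.mem_Ioc]
      have hposm : 1 * q ≤ i * q := Nat.mul_le_mul_right q hi1
      rcases hcond with h | ⟨h1, h2⟩
      · have heq : (i * q + j * p) % (p * q) = i * q + j * p :=
          Nat.mod_eq_of_lt (by omega)
        rw [heq]
        exact ⟨⟨by omega, h⟩, hpd, hqd⟩
      · have heq : (i * q + j * p) % (p * q) = i * q + j * p - p * q := by
          rw [Nat.mod_eq_sub_mod (by omega), Nat.mod_eq_of_lt (by omega)]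
        rw [heq]
        refine ⟨⟨?_, by omega⟩, ?_, ?_⟩
        · rcases Nat.eq_zero_or_pos (i * q + j * p - p * q) with h0 | h1'
          · exfalso
            apply hpd
            have he : i * q + j * p = p * q := by omega
            rw [he]; exact dvd_mul_right p q
          · exact h1'
        · intro hd; apply hpd
          have he : i * q + j * p = (i * q + j * p - p * q) + p * q := by omega
          rw [he]; exact Dvd.dvd.add hd (dvd_mul_right p q)
        · intro hd; apply hqd
          have he : i * q + j * p = (i * q + j * p - p * q) + p * q := by omega
          rw [he]; exact Dvd.dvd.add hd (dvd_mul_left q p)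
    · -- injective
      rintro ⟨i1, j1⟩ h1 ⟨i2, j2⟩ h2 heq
      simp only [hSdef, Finset.mem_filter, Finset.mem_product, Finset.mem_Icc] at h1 h2
      obtain ⟨⟨⟨hi11, hi12⟩, hj11, hj12⟩, _⟩ := h1
      obtain ⟨⟨⟨hi21, hi22⟩, hj21, hj22⟩, _⟩ := h2
      have hmod : i1 * q + j1 * p ≡ i2 * q + j2 * p [MOD p * q] := heq
      have hmp : i1 * q + j1 * p ≡ i2 * q + j2 * p [MOD p] := hmod.of_mul_right q
      have hmq : i1 * q + j1 * p ≡ i2 * q + j2 * p [MOD q] := hmod.of_mul_left p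
      have hiq : i1 * q ≡ i2 * q [MOD p] := by
        have e1 : i1 * q + j1 * p ≡ i1 * q + 0 [MOD p] :=
          (Nat.ModEq.refl _).add ((Nat.modEq_zero_iff_dvd).mpr (dvd_mul_left p j1))
        have e2 : i2 * q + j2 * p ≡ i2 * q + 0 [MOD p] :=
          (Nat.ModEq.refl _).add ((Nat.modEq_zero_iff_dvd).mpr (dvd_mul_left p j2))
        calc i1 * q ≡ i1 * q + j1 * p [MOD p] := by simpa using e1.symm
          _ ≡ i2 * q + j2 * p [MOD p] := hmp
          _ ≡ i2 * q [MOD p] := by simpa using e2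
      have hjp : j1 * p ≡ j2 * p [MOD q] := by
        have e1 : i1 * q + j1 * p ≡ 0 + j1 * p [MOD q] :=
          ((Nat.modEq_zero_iff_dvd).mpr (dvd_mul_left q i1)).add (Nat.ModEq.refl _)
        have e2 : i2 * q + j2 * p ≡ 0 + j2 * p [MOD q] :=
          ((Nat.modEq_zero_iff_dvd).mpr (dvd_mul_left q i2)).add (Nat.ModEq.refl _)
        calc j1 * p ≡ i1 * q + j1 * p [MOD q] := by simpa using e1.symm
          _ ≡ i2 * q + j2 * p [MOD q] := hmq
          _ ≡ j2 * p [MOD q] := by simpa using e2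
      have hi : i1 ≡ i2 [MOD p] := Nat.ModEq.cancel_right_of_coprime hcop hiq
      have hj : j1 ≡ j2 [MOD q] := Nat.ModEq.cancel_right_of_coprime hcop.symm hjp
      have hieq : i1 = i2 := by
        have h := hi
        unfold Nat.ModEq at h
        rw [Nat.mod_eq_of_lt (by omega), Nat.mod_eq_of_lt (by omega)] at h
        exact h
      have hjeq : j1 = j2 := by
        have h := hj
        unfold Nat.ModEq at h
        rw [Nat.mod_eq_of_lt (by omega), Nat.mod_eq_of_lt (by omega)] at h
        exact h
      exact Prod.ext hieq hjeq
    · -- surjective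
      intro n hn
      simp only [hTdef, Finset.mem_filter, Finset.mem_Ioc] at hn
      obtain ⟨⟨hn0, hna⟩, hnp, hnq⟩ := hn
      obtain ⟨i, hi1, hi2, hicong⟩ := exists_solution hp hcop.symm hnp
      obtain ⟨j, hj1, hj2, hjcong⟩ := exists_solution hq2 hcop hnq
      have hmp : i * q + j * p ≡ n [MOD p] := by
        have h := hicong.add ((Nat.modEq_zero_iff_dvd).mpr (dvd_mul_left p j))
        simpa using h
      have hmq : i * q + j * p ≡ n [MOD q] := by
        have h := ((Nat.modEq_zero_iff_dvd).mpr (dvd_mul_left q i)).add hjcong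
        simpa using h
      have hmpq : i * q + j * p ≡ n [MOD p * q] :=
        (Nat.modEq_and_modEq_iff_modEq_mul hcop).mp ⟨hmp, hmq⟩
      have hval : (i * q + j * p) % (p * q) = n := by
        rw [show (i * q + j * p) % (p * q) = n % (p * q) from hmpq]
        exact Nat.mod_eq_of_lt (by omega)
      refine ⟨(i, j), ?_, hval⟩
      simp only [hSdef, Finset.mem_filter, Finset.mem_product, Finset.mem_Icc]
      refine ⟨⟨⟨hi1, hi2⟩, hj1, hj2⟩, ?_⟩
      have hlt := hlt2 i j hi2 hj2
      have hdm := Nat.div_add_mod (i * q + j * p) (p * q)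
      rw [hval] at hdm
      have hqle : (i * q + j * p) / (p * q) ≤ 1 := by
        by_contra h
        push_neg at h
        have : 2 * (p * q) ≤ (p * q) * ((i * q + j * p) / (p * q)) := by
          calc 2 * (p * q) = (p * q) * 2 := by ring
            _ ≤ (p * q) * ((i * q + j * p) / (p * q)) := Nat.mul_le_mul_left _ h
        omega
      rcases Nat.le_one_iff_eq_zero_or_eq_one.mp hqle with h0 | h1
      · rw [h0] at hdm; left; omega
      · rw [h1] at hdm; right; omega
  -- count T
  have hA : ((Finset.Ioc 0 a).filter (fun n => p ∣ n)).card = a / p :=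
    Nat.Ioc_filter_dvd_card_eq_div a p
  have hB : ((Finset.Ioc 0 a).filter (fun n => q ∣ n)).card = a / q :=
    Nat.Ioc_filter_dvd_card_eq_div a q
  have hdisj : Disjoint ((Finset.Ioc 0 a).filter (fun n => p ∣ n))
      ((Finset.Ioc 0 a).filter (fun n => q ∣ n)) := by
    rw [Finset.disjoint_left]
    intro n hn1 hn2
    simp only [Finset.mem_filter, Finset.mem_Ioc] at hn1 hn2
    have h := Nat.Coprime.mul_dvd_of_dvd_of_dvd hcop hn1.2 hn2.2
    have := Nat.le_of_dvd hn1.1.1 h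
    omega
  have hTeq : T = Finset.Ioc 0 a \
      (((Finset.Ioc 0 a).filter (fun n => p ∣ n)) ∪ ((Finset.Ioc 0 a).filter (fun n => q ∣ n))) := by
    ext n
    simp only [hTdef, Finset.mem_filter, Finset.mem_sdiff, Finset.mem_union, Finset.mem_Ioc]
    tauto
  have hsub : (((Finset.Ioc 0 a).filter (fun n => p ∣ n)) ∪
      ((Finset.Ioc 0 a).filter (fun n => q ∣ n))) ⊆ Finset.Ioc 0 a :=
    Finset.union_subset (Finset.filter_subset _ _) (Finset.filter_subset _ _)
  have hTcard : T.card = a - (a / p + a / q) := by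
    rw [hTeq, Finset.card_sdiff_of_subset hsub, Finset.card_union_of_disjoint hdisj, hA, hB,
      Nat.card_Ioc]
    omega
  have hle : a / p + a / q ≤ a := by
    have h := Finset.card_le_card hsub
    rw [Finset.card_union_of_disjoint hdisj, hA, hB, Nat.card_Ioc] at h
    omega
  rw [hsetS, Set.ncard_coe_finset, hcard, hTcard]
  set u := a / p
  set v := a / q
  omega
end

section
/- One has 2·#{s ∈ ℕ : s ∉ S and s ≥ δ} ≤ δ + 1. (Equivalently, −d(S³₁(T_{p,q})) ≤ g₄(T_{p,q}) + 1, since the four-genus of T_{p,q} equals δ.) -/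
/-- The numerical semigroup generated by `p` and `q` (containing `0`). -/
def torusSemigroup (p q : ℕ) : Set ℕ := {s | ∃ a b : ℕ, s = a * p + b * q}

lemma torus_add_mem {p q s t : ℕ} (hs : s ∈ torusSemigroup p q)
    (ht : t ∈ torusSemigroup p q) : s + t ∈ torusSemigroup p q := by
  obtain ⟨a, b, rfl⟩ := hs
  obtain ⟨c, d, rfl⟩ := ht
  exact ⟨a + c, b + d, by ring⟩

/-- A canonical residue: there is `a < q` with `a*p ≡ n [MOD q]`. -/
lemma torus_exists_rep (p q n : ℕ) (hcop : Nat.Coprime p q) (hq : 0 < q) :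
    ∃ a : ℕ, a < q ∧ a * p ≡ n [MOD q] := by
  haveI : NeZero q := ⟨by omega⟩
  refine ⟨((n : ZMod q) * (p : ZMod q)⁻¹).val, ZMod.val_lt _, ?_⟩
  rw [← ZMod.natCast_eq_natCast_iff]
  push_cast
  rw [ZMod.natCast_val, ZMod.cast_id]
  have h1 : (p : ZMod q) * (p : ZMod q)⁻¹ = 1 := ZMod.coe_mul_inv_eq_one p hcop
  calc (n : ZMod q) * (p : ZMod q)⁻¹ * (p : ZMod q)
      = (n : ZMod q) * ((p : ZMod q) * (p : ZMod q)⁻¹) := by ring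
    _ = (n : ZMod q) := by rw [h1, mul_one]

/-- If a gap exists it satisfies the key dichotomy. -/
lemma torus_rep_dichotomy {p q n : ℕ} (hp : 2 ≤ p) (hpq : p < q) (hcop : Nat.Coprime p q)
    (hn : n ∉ torusSemigroup p q) :
    ∃ a d : ℕ, a < q ∧ 1 ≤ d ∧ a * p = n + d * q := by
  obtain ⟨a, ha, hmod⟩ := torus_exists_rep p q n hcop (by omega)
  rcases le_or_gt (a * p) n with hle | hlt
  · exfalso
    obtain ⟨d, hd⟩ := (Nat.modEq_iff_dvd' hle).mp hmod
    have hcm : q * d = d * q := Nat.mul_comm q d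
    exact hn ⟨a, d, by omega⟩
  · obtain ⟨d, hd⟩ := (Nat.modEq_iff_dvd' hlt.le).mp hmod.symm
    have hcm : q * d = d * q := Nat.mul_comm q d
    have h1 : d ≠ 0 := by rintro rfl; simp at hd; omega
    exact ⟨a, d, ha, by omega, by omega⟩

/-- If `n` is a gap then `n + p + q ≤ pq`. -/
lemma torus_gap_le {p q : ℕ} (hp : 2 ≤ p) (hpq : p < q) (hcop : Nat.Coprime p q)
    {n : ℕ} (hn : n ∉ torusSemigroup p q) : n + p + q ≤ p * q := by
  obtain ⟨a, d, ha, hd1, heq⟩ := torus_rep_dichotomy hp hpq hcop hn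
  have hap : a * p + p ≤ p * q := by
    have h1 : (a + 1) * p ≤ q * p := Nat.mul_le_mul_right p (by omega)
    have h2 : (a + 1) * p = a * p + p := by ring
    have h3 : q * p = p * q := Nat.mul_comm q p
    omega
  have hdq : q ≤ d * q := Nat.le_mul_of_pos_left q (by omega)
  omega

/-- The Frobenius number `pq - p - q` is a gap. -/
lemma torus_frob_notMem {p q : ℕ} (hp : 2 ≤ p) (hpq : p < q) (hcop : Nat.Coprime p q) :
    p * q - p - q ∉ torusSemigroup p q := by
  rintro ⟨a, b, heq⟩
  have hpq2 : p + q ≤ p * q := by nlinarith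
  have heq' : p * q = a * p + b * q + p + q := by omega
  have haq : a + 1 ≤ q := by nlinarith
  have h2 : p * (q - a - 1) = p * q - p * a - p := by
    rw [Nat.mul_sub, Nat.mul_sub]
    omega
  have hkey : (b + 1) * q = p * (q - a - 1) := by
    have hc1 : a * p = p * a := Nat.mul_comm a p
    have hbq : (b + 1) * q = b * q + q := by ring
    omega
  have hdvd : p ∣ (b + 1) * q := ⟨q - a - 1, hkey⟩
  have hdvdb : p ∣ b + 1 := (Nat.Coprime.dvd_of_dvd_mul_right hcop) hdvd
  have hb : p ≤ b + 1 := Nat.le_of_dvd (by omega) hdvdb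
  have h4 : (p - 1) * q ≤ b * q := Nat.mul_le_mul_right q (by omega)
  have h3 : (p - 1) * q = p * q - q := by
    rw [Nat.sub_mul]; omega
  omega

/-- Symmetry: a gap `n` reflects to an element `pq - p - q - n` of the semigroup. -/
lemma torus_gap_symm {p q : ℕ} (hp : 2 ≤ p) (hpq : p < q) (hcop : Nat.Coprime p q)
    {n : ℕ} (hn : n ∉ torusSemigroup p q) :
    p * q - p - q - n ∈ torusSemigroup p q := by
  have hle : n + p + q ≤ p * q := torus_gap_le hp hpq hcop hn
  obtain ⟨a, d, ha, hd1, heq⟩ := torus_rep_dichotomy hp hpq hcop hn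
  refine ⟨q - 1 - a, d - 1, ?_⟩
  have hqa : (q - 1 - a) * p = p * q - p - a * p := by
    rw [Nat.sub_mul, Nat.sub_mul]
    have hc : q * p = p * q := Nat.mul_comm q p
    omega
  have hdq : (d - 1) * q = d * q - q := by
    rw [Nat.sub_mul]; omega
  have hap : a * p + p ≤ p * q := by
    have h1 : (a + 1) * p ≤ q * p := Nat.mul_le_mul_right p (by omega)
    have h2 : (a + 1) * p = a * p + p := by ring
    have h3 : q * p = p * q := Nat.mul_comm q p
    omega
  have hdq2 : q ≤ d * q := Nat.le_mul_of_pos_left q (by omega)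
  omega

/-- `2·#{s ∉ S : s ≥ δ} ≤ δ + 1`; equivalently
`−d(S³₁(T_{p,q})) ≤ g₄(T_{p,q}) + 1`, since the four-genus of `T_{p,q}` equals `δ`. -/
theorem d_invariant_genus_bound (p q : ℕ) (hp : 2 ≤ p) (hpq : p < q) (hcop : Nat.Coprime p q)
    (δ : ℕ) (hδ : 2 * δ = (p - 1) * (q - 1)) :
    2 * Set.ncard {s : ℕ | s ∉ torusSemigroup p q ∧ δ ≤ s} ≤ δ + 1 := by
  -- key numeric identity: p*q + 1 = 2*δ + p + q
  have hkey : p * q + 1 = 2 * δ + p + q := by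
    have h1 : (p - 1) * (q - 1) = p * q - p - q + 1 := by
      rw [Nat.sub_mul, Nat.mul_sub, Nat.one_mul]
      have h2 : q * 1 = q := by ring
      have h3 : p + q ≤ p * q := by nlinarith
      omega
    have h3 : p + q ≤ p * q := by nlinarith
    omega
  have hδ1 : 1 ≤ δ := by nlinarith
  set S := torusSemigroup p q with hS
  set T : Set ℕ := {s : ℕ | s ∉ S ∧ δ ≤ s} with hT
  set A : Set ℕ := {s : ℕ | s ∈ S ∧ s < δ} with hA
  have hAfin : A.Finite := Set.Finite.subset (Set.finite_Iio δ) (fun s hs => hs.2)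
  -- Step 1 : |T| ≤ |A| via s ↦ 2δ-1-s
  have hTle : T.ncard ≤ A.ncard := by
    refine Set.ncard_le_ncard_of_injOn (fun s => 2 * δ - 1 - s) ?_ ?_ hAfin
    · rintro s ⟨hsS, hsδ⟩
      have hle := torus_gap_le hp hpq hcop hsS
      have hmem := torus_gap_symm hp hpq hcop hsS
      have heq : p * q - p - q - s = 2 * δ - 1 - s := by omega
      show (2 * δ - 1 - s) ∈ S ∧ (2 * δ - 1 - s) < δ
      exact ⟨by rwa [heq] at hmem, by omega⟩
    · rintro s ⟨hsS, hsδ⟩ t ⟨htS, htδ⟩ hst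
      have h1 := torus_gap_le hp hpq hcop hsS
      have h2 := torus_gap_le hp hpq hcop htS
      simp only at hst
      omega
  -- Step 2 : |A| ≤ (δ-1)/2 + 1
  have hAle : A.ncard ≤ (δ - 1) / 2 + 1 := by
    by_cases hc : (δ - 1) ∈ S
    · -- then δ ∉ S (else (δ-1) + δ = 2δ-1 = pq-p-q ∈ S)
      have hδnot : δ ∉ S := by
        intro hδS
        apply torus_frob_notMem hp hpq hcop
        have h5 : p * q - p - q = (δ - 1) + δ := by omega
        rw [hS] at *
        rw [h5]
        exact torus_add_mem hc hδS
      calc A.ncard ≤ (↑(Finset.range ((δ - 1) / 2 + 1)) : Set ℕ).ncard := by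
            refine Set.ncard_le_ncard_of_injOn (fun s => min s (δ - s)) ?_ ?_
              (Finset.range ((δ - 1) / 2 + 1)).finite_toSet
            · rintro s ⟨hsS, hsδ⟩
              simp only [Finset.coe_range, Set.mem_Iio]
              by_contra hbig
              have h6 : δ = s + s := by omega
              exact hδnot (h6 ▸ torus_add_mem hsS hsS)
            · rintro s ⟨hsS, hsδ⟩ t ⟨htS, htδ⟩ hst
              simp only at hst
              by_contra hne
              have h7 : s + t = δ := by omega
              exact hδnot (h7 ▸ torus_add_mem hsS htS)
        _ = (δ - 1) / 2 + 1 := by rw [Set.ncard_coe_finset, Finset.card_range]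
    · calc A.ncard ≤ (↑(Finset.range ((δ - 1) / 2 + 1)) : Set ℕ).ncard := by
            refine Set.ncard_le_ncard_of_injOn (fun s => min s (δ - 1 - s)) ?_ ?_
              (Finset.range ((δ - 1) / 2 + 1)).finite_toSet
            · rintro s ⟨hsS, hsδ⟩
              simp only [Finset.coe_range, Set.mem_Iio]
              omega
            · rintro s ⟨hsS, hsδ⟩ t ⟨htS, htδ⟩ hst
              simp only at hst
              by_contra hne
              have h7 : s + t = δ - 1 := by omega
              exact hc (h7 ▸ torus_add_mem hsS htS)
        _ = (δ - 1) / 2 + 1 := by rw [Set.ncard_coe_finset, Finset.card_range]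
  omega
end

section
/- One has #{(i,j) : 1 ≤ i ≤ p−1, 1 ≤ j ≤ q−1, and 2(pq + δ) ≤ 2(iq + jp) < 3pq} ≤ q − 1. (In terms of the spectrum, the number of spectral numbers i/p + j/q lying in the interval [1 + δ/(pq), 3/2) is at most q − 1.) -/
/-!
The map `(i, j) ↦ i q + j p` is injective on pairs with `i < p` because `p` and `q` are coprime,
and it sends the pairs in question into the integers `n` with `pq + δ ≤ n` and `2n < 3pq`.
Since `2δ = pq - p - q + 1`, there are at most `(p + q) / 2 ≤ q - 1` such integers.
-/

theorem Nat.Coprime.injOn_mul_add_mul {p q : ℕ} (hcop : Nat.Coprime p q) :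
    Set.InjOn (fun x : ℕ × ℕ => x.1 * q + x.2 * p) {x | x.1 < p} := by
  intro a ha b hb hab
  have hmod : a.1 * q ≡ b.1 * q [MOD p] := by
    simpa only [Nat.ModEq, Nat.add_mul_mod_self_right] using congrArg (· % p) hab
  have h1 : a.1 = b.1 := (hmod.cancel_right_of_coprime hcop).eq_of_lt_of_lt ha hb
  have h2 : a.2 = b.2 := by
    simp only [h1, Nat.add_left_cancel_iff] at hab
    exact Nat.eq_of_mul_eq_mul_right (Nat.zero_lt_of_lt ha) hab
  exact Prod.ext h1 h2

theorem Nat.ncard_setOf_le_and_two_mul_lt (a b : ℕ) :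
    {n : ℕ | a ≤ n ∧ 2 * n < b}.ncard = (b + 1) / 2 - a := by
  have : {n : ℕ | a ≤ n ∧ 2 * n < b} = ↑(Finset.Ico a ((b + 1) / 2)) := by
    ext n
    simp only [Set.mem_ofPred_eq, Finset.coe_Ico, Set.mem_Ico]
    omega
  rw [this, Set.ncard_coe_finset, Nat.card_Ico]

theorem three_mul_add_one_div_two_sub_le {p q δ : ℕ} (hpq : p < q)
    (hδ : 2 * δ = (p - 1) * (q - 1)) :
    (3 * (p * q) + 1) / 2 - (p * q + δ) ≤ q - 1 := by
  rcases Nat.eq_zero_or_pos p with rfl | hp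
  · omega
  have h : 2 * δ + p + q = p * q + 1 := by
    zify [hp, hpq.le.trans' hp] at hδ ⊢
    linear_combination hδ
  omega

theorem spectrum_count_le_general (p q : ℕ) (hpq : p < q) (hcop : Nat.Coprime p q)
    (δ : ℕ) (hδ : 2 * δ = (p - 1) * (q - 1)) :
    Set.ncard {x : ℕ × ℕ | 1 ≤ x.1 ∧ x.1 ≤ p - 1 ∧ 1 ≤ x.2 ∧ x.2 ≤ q - 1 ∧
        2 * (p * q + δ) ≤ 2 * (x.1 * q + x.2 * p) ∧ 2 * (x.1 * q + x.2 * p) < 3 * (p * q)} ≤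
      q - 1 := by
  calc _ ≤ {n : ℕ | p * q + δ ≤ n ∧ 2 * n < 3 * (p * q)}.ncard := by
        refine Set.ncard_le_ncard_of_injOn (fun x => x.1 * q + x.2 * p) ?mapsTo ?injOn ?finite
        case mapsTo => exact fun x ⟨_, _, _, _, hlow, hhigh⟩ => ⟨by omega, hhigh⟩
        case injOn =>
          exact hcop.injOn_mul_add_mul.mono fun x ⟨_, hi, _⟩ => show x.1 < p by omega
        case finite =>
          exact (Set.finite_Iio ((3 * (p * q) + 1) / 2)).subset fun n ⟨_, hn⟩ =>
            show n < _ by omega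
    _ = (3 * (p * q) + 1) / 2 - (p * q + δ) := Nat.ncard_setOf_le_and_two_mul_lt _ _
    _ ≤ q - 1 := three_mul_add_one_div_two_sub_le hpq hδ

/-- the number of pairs `(i,j)` with `1 ≤ i ≤ p−1`, `1 ≤ j ≤ q−1` and
`2(pq + δ) ≤ 2(iq + jp) < 3pq` is at most `q − 1`; these pairs count the spectral numbers
`i/p + j/q` of `x^p + y^q = 0` lying in the interval `[1 + δ/(pq), 3/2)`. -/
theorem spectrum_count_le (p q : ℕ) (hp : 2 ≤ p) (hpq : p < q) (hcop : Nat.Coprime p q)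
    (δ : ℕ) (hδ : 2 * δ = (p - 1) * (q - 1)) :
    Set.ncard {x : ℕ × ℕ | 1 ≤ x.1 ∧ x.1 ≤ p - 1 ∧ 1 ≤ x.2 ∧ x.2 ≤ q - 1 ∧
        2 * (p * q + δ) ≤ 2 * (x.1 * q + x.2 * p) ∧ 2 * (x.1 * q + x.2 * p) < 3 * (p * q)} ≤
      q - 1 :=
  spectrum_count_le_general p q hpq hcop δ hδ
end
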